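/- Let $D \in \mathbb{R}^{2n \times n}$, $K \in \mathbb{R}^{n \times n}$ be matrices with $\mathrm{null}(D) \cap \mathrm{null}(K) = \{0\}$, let $L_1,\ldots,L_n \in \mathbb{R}^{2\times 2}$ be invertible matrices, let $\mu > 0$ and $g \in \mathbb{R}^n$. If $p_i > 1$ for every $i = 1,\ldots,n$, then the DTV$_p^{\mathrm{sv}}$-L$_2$ functional $\mathcal{J}(u) = \sum_{i=1}^{n} \|L_i \,((Du)_{2i-1}, (Du)_{2i})\|_2^{p_i} + \frac{\mu}{2}\|Ku - g\|_2^2$ is strictly convex on $\mathbb{R}^n$, and hence admits a unique global minimiser. -/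

import Mathlib

open Real Set Filter Finset Matrix


private lemma sqrt_two_sq (v : EuclideanSpace ℝ (Fin 2)) :
    Real.sqrt (v 0 ^ 2 + v 1 ^ 2) = ‖v‖ := by
  rw [EuclideanSpace.norm_eq, Fin.sum_univ_two]
  simp [Real.norm_eq_abs, sq_abs]

private lemma sqrt_sum_sq {m : ℕ} (v : EuclideanSpace ℝ (Fin m)) :
    Real.sqrt (∑ j, v j ^ 2) = ‖v‖ := by
  rw [EuclideanSpace.norm_eq]
  congr 1
  exact Finset.sum_congr rfl fun j _ => by simp [Real.norm_eq_abs, sq_abs]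

private lemma sub_one_le_rpow {t : ℝ} (ht : 0 ≤ t) {q : ℝ} (hq : 1 ≤ q) : t - 1 ≤ t ^ q := by
  rcases le_or_gt t 1 with h | h
  · have := Real.rpow_nonneg ht q; linarith
  · calc t - 1 ≤ t := by linarith
    _ = t ^ (1 : ℝ) := (Real.rpow_one t).symm
    _ ≤ t ^ q := Real.rpow_le_rpow_of_exponent_le h.le hq

private lemma normPow_le {E : Type*} [NormedAddCommGroup E] [NormedSpace ℝ E]
    {q : ℝ} (hq : 1 ≤ q) (x y : E) {a b : ℝ} (ha : 0 ≤ a) (hb : 0 ≤ b) (hab : a + b = 1) :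
    ‖a • x + b • y‖ ^ q ≤ a * ‖x‖ ^ q + b * ‖y‖ ^ q := by
  have h1 : ‖a • x + b • y‖ ≤ a * ‖x‖ + b * ‖y‖ := by
    calc ‖a • x + b • y‖ ≤ ‖a • x‖ + ‖b • y‖ := norm_add_le _ _
    _ = a * ‖x‖ + b * ‖y‖ := by
        rw [norm_smul, norm_smul, Real.norm_eq_abs, Real.norm_eq_abs,
          abs_of_nonneg ha, abs_of_nonneg hb]
  have h2 : ‖a • x + b • y‖ ^ q ≤ (a * ‖x‖ + b * ‖y‖) ^ q :=
    Real.rpow_le_rpow (norm_nonneg _) h1 (by linarith)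
  refine h2.trans ?_
  have := (convexOn_rpow hq).2 (mem_Ici.2 (norm_nonneg x)) (mem_Ici.2 (norm_nonneg y)) ha hb hab
  simpa [smul_eq_mul] using this

private lemma normPow_lt {E : Type*} [NormedAddCommGroup E] [NormedSpace ℝ E]
    [StrictConvexSpace ℝ E]
    {q : ℝ} (hq : 1 < q) {x y : E} (hxy : x ≠ y) {a b : ℝ} (ha : 0 < a) (hb : 0 < b)
    (hab : a + b = 1) :
    ‖a • x + b • y‖ ^ q < a * ‖x‖ ^ q + b * ‖y‖ ^ q := by
  have h1 : ‖a • x + b • y‖ ≤ a * ‖x‖ + b * ‖y‖ := by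
    calc ‖a • x + b • y‖ ≤ ‖a • x‖ + ‖b • y‖ := norm_add_le _ _
    _ = a * ‖x‖ + b * ‖y‖ := by
        rw [norm_smul, norm_smul, Real.norm_eq_abs, Real.norm_eq_abs,
          abs_of_nonneg ha.le, abs_of_nonneg hb.le]
  rcases eq_or_lt_of_le h1 with heq | hlt
  · -- equality: same ray
    have hray : SameRay ℝ (a • x) (b • y) := by
      rw [sameRay_iff_norm_add]
      rw [norm_smul, norm_smul, Real.norm_eq_abs, Real.norm_eq_abs,
        abs_of_nonneg ha.le, abs_of_nonneg hb.le]
      exact heq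
    have hne : ‖x‖ ≠ ‖y‖ := by
      intro hn
      apply hxy
      rcases hray with h0 | h0 | ⟨r, s, hr, hs, hrs⟩
      · have hx0 : x = 0 := by
          rcases smul_eq_zero.mp h0 with h | h
          · exact absurd h ha.ne'
          · exact h
        have : ‖y‖ = 0 := by rw [← hn, hx0, norm_zero]
        rw [hx0, norm_eq_zero.mp this]
      · have hy0 : y = 0 := by
          rcases smul_eq_zero.mp h0 with h | h
          · exact absurd h hb.ne'
          · exact h
        have : ‖x‖ = 0 := by rw [hn, hy0, norm_zero]
        rw [hy0, norm_eq_zero.mp this]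
      · rw [smul_smul, smul_smul] at hrs
        rcases eq_or_ne x 0 with hx0 | hx0
        · have : ‖y‖ = 0 := by rw [← hn, hx0, norm_zero]
          rw [hx0, norm_eq_zero.mp this]
        · have hnx : (0:ℝ) < ‖x‖ := norm_pos_iff.mpr hx0
          have hnorm : r * a * ‖x‖ = s * b * ‖y‖ := by
            have := congrArg norm hrs
            rwa [norm_smul, norm_smul, Real.norm_eq_abs, Real.norm_eq_abs,
              abs_of_pos (by positivity), abs_of_pos (by positivity)] at this
          rw [← hn] at hnorm
          have hco : r * a = s * b := mul_right_cancel₀ hnx.ne' hnorm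
          rw [hco] at hrs
          exact smul_right_injective E (by positivity : (0:ℝ) < s * b).ne' hrs
    have h2 := (strictConvexOn_rpow hq).2 (mem_Ici.2 (norm_nonneg x)) (mem_Ici.2 (norm_nonneg y))
      hne ha hb hab
    simp only [smul_eq_mul] at h2
    rw [heq]
    exact h2
  · have h2 : ‖a • x + b • y‖ ^ q < (a * ‖x‖ + b * ‖y‖) ^ q :=
      Real.rpow_lt_rpow (norm_nonneg _) hlt (by linarith)
    refine h2.trans_le ?_
    have := (convexOn_rpow hq.le).2 (mem_Ici.2 (norm_nonneg x)) (mem_Ici.2 (norm_nonneg y))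
      ha.le hb.le hab
    simpa [smul_eq_mul] using this

private def gradFn {n : ℕ} (D : Matrix (Fin (2 * n)) (Fin n) ℝ) (u : Fin n → ℝ) (i : Fin n) :
    Fin 2 → ℝ :=
  ![D.mulVec u ⟨2 * i.1, by omega⟩, D.mulVec u ⟨2 * i.1 + 1, by omega⟩]

private def Wfn {n : ℕ} (D : Matrix (Fin (2 * n)) (Fin n) ℝ)
    (L : Fin n → Matrix (Fin 2) (Fin 2) ℝ) (u : EuclideanSpace ℝ (Fin n)) (i : Fin n) :
    EuclideanSpace ℝ (Fin 2) :=
  WithLp.toLp 2 ((L i).mulVec (gradFn D u i))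

private def Kfn {n : ℕ} (K : Matrix (Fin n) (Fin n) ℝ) (u : EuclideanSpace ℝ (Fin n)) :
    EuclideanSpace ℝ (Fin n) :=
  WithLp.toLp 2 (K.mulVec u)

private lemma combo_sq (a b s t G : ℝ) (hab : a + b = 1) :
    (a * s + b * t - G) ^ 2 = a * (s - G) ^ 2 + b * (t - G) ^ 2 - a * b * (s - t) ^ 2 := by
  linear_combination (a * s ^ 2 + b * t ^ 2 - G ^ 2) * hab

private lemma mulVec_combo {n m : ℕ} (M : Matrix (Fin m) (Fin n) ℝ) (a b : ℝ)
    (x y : EuclideanSpace ℝ (Fin n)) :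
    M.mulVec (a • x + b • y) = a • M.mulVec x + b • M.mulVec y := by
  show M.mulVec (a • (x : Fin n → ℝ) + b • (y : Fin n → ℝ)) = _
  rw [Matrix.mulVec_add, Matrix.mulVec_smul, Matrix.mulVec_smul]

private lemma mulVec_smul' {n m : ℕ} (M : Matrix (Fin m) (Fin n) ℝ) (a : ℝ)
    (x : EuclideanSpace ℝ (Fin n)) :
    M.mulVec (a • x) = a • M.mulVec x := by
  show M.mulVec (a • (x : Fin n → ℝ)) = _
  rw [Matrix.mulVec_smul]

private lemma gradFn_combo {n : ℕ} (D : Matrix (Fin (2 * n)) (Fin n) ℝ) (a b : ℝ)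
    (x y : EuclideanSpace ℝ (Fin n)) (i : Fin n) :
    gradFn D (a • x + b • y) i = a • gradFn D x i + b • gradFn D y i := by
  have hD := mulVec_combo D a b x y
  funext k
  fin_cases k <;> simp [gradFn, hD, Pi.add_apply, Pi.smul_apply, smul_eq_mul]

private lemma gradFn_smul {n : ℕ} (D : Matrix (Fin (2 * n)) (Fin n) ℝ) (a : ℝ)
    (x : EuclideanSpace ℝ (Fin n)) (i : Fin n) :
    gradFn D (a • x) i = a • gradFn D x i := by
  have hD := mulVec_smul' D a x
  funext k
  fin_cases k <;> simp [gradFn, hD, Pi.smul_apply, smul_eq_mul]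

private lemma Wfn_combo {n : ℕ} (D : Matrix (Fin (2 * n)) (Fin n) ℝ)
    (L : Fin n → Matrix (Fin 2) (Fin 2) ℝ) (a b : ℝ) (x y : EuclideanSpace ℝ (Fin n)) (i : Fin n) :
    Wfn D L (a • x + b • y) i = a • Wfn D L x i + b • Wfn D L y i := by
  show WithLp.toLp 2 ((L i).mulVec (gradFn D (a • x + b • y) i)) = _
  rw [gradFn_combo, Matrix.mulVec_add, Matrix.mulVec_smul, Matrix.mulVec_smul]
  rfl

private lemma Wfn_smul {n : ℕ} (D : Matrix (Fin (2 * n)) (Fin n) ℝ)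
    (L : Fin n → Matrix (Fin 2) (Fin 2) ℝ) (a : ℝ) (x : EuclideanSpace ℝ (Fin n)) (i : Fin n) :
    Wfn D L (a • x) i = a • Wfn D L x i := by
  show WithLp.toLp 2 ((L i).mulVec (gradFn D (a • x) i)) = _
  rw [gradFn_smul, Matrix.mulVec_smul]
  rfl

private lemma Kfn_smul {n : ℕ} (K : Matrix (Fin n) (Fin n) ℝ) (a : ℝ)
    (x : EuclideanSpace ℝ (Fin n)) : Kfn K (a • x) = a • Kfn K x := by
  show WithLp.toLp 2 (K.mulVec (a • x)) = _
  rw [mulVec_smul']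
  rfl

private lemma cont_mulVec {n m : ℕ} (M : Matrix (Fin m) (Fin n) ℝ) (k : Fin m) :
    Continuous fun u : EuclideanSpace ℝ (Fin n) => M.mulVec u k := by
  have h : Continuous fun u : Fin n → ℝ => M.mulVec u k :=
    (continuous_pi_iff.mp (Continuous.matrix_mulVec continuous_const continuous_id)) k
  exact h.comp (PiLp.continuous_ofLp 2 fun _ : Fin n => ℝ)

private lemma cont_pi2 {n : ℕ} {f : EuclideanSpace ℝ (Fin n) → EuclideanSpace ℝ (Fin 2)}
    (h : ∀ k, Continuous fun u => f u k) : Continuous f := by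
  have : Continuous fun u => ((f u : Fin 2 → ℝ)) := continuous_pi h
  exact ((PiLp.continuous_toLp 2 fun _ : Fin 2 => ℝ).comp this : _)
private theorem key {n : ℕ}
    (D : Matrix (Fin (2 * n)) (Fin n) ℝ) (K : Matrix (Fin n) (Fin n) ℝ)
    (hnull : ∀ u : Fin n → ℝ, D.mulVec u = 0 → K.mulVec u = 0 → u = 0)
    (L : Fin n → Matrix (Fin 2) (Fin 2) ℝ) (hL : ∀ i, IsUnit (L i))
    (p : Fin n → ℝ) (hp : ∀ i, 1 < p i) (μ : ℝ) (hμ : 0 < μ) (g : Fin n → ℝ)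
    (J : EuclideanSpace ℝ (Fin n) → ℝ)
    (hJ : ∀ u, J u = (∑ i : Fin n,
        Real.sqrt (((L i).mulVec (gradFn D u i) 0) ^ 2
          + ((L i).mulVec (gradFn D u i) 1) ^ 2) ^ p i)
        + μ / 2 * ∑ j : Fin n, (K.mulVec u j - g j) ^ 2) :
    StrictConvexOn ℝ Set.univ J ∧ ∃! ustar : EuclideanSpace ℝ (Fin n), ∀ u, J ustar ≤ J u := by
  classical
  -- norm form of J
  have hJ' : ∀ u, J u = (∑ i : Fin n, ‖Wfn D L u i‖ ^ p i)
      + μ / 2 * ∑ j : Fin n, (K.mulVec u j - g j) ^ 2 := by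
    intro u
    rw [hJ]
    congr 1
    refine Finset.sum_congr rfl fun i _ => ?_
    congr 1
    exact sqrt_two_sq (Wfn D L u i)
  -- injectivity of L i
  have hLinj : ∀ i, Function.Injective ((L i).mulVec) := fun i =>
    Matrix.mulVec_injective_iff_isUnit.mpr (hL i)
  -- if all Wfn vanish then D.mulVec u = 0
  have hWzero : ∀ u : EuclideanSpace ℝ (Fin n), (∀ i, Wfn D L u i = 0) → D.mulVec u = 0 := by
    intro u hW
    funext k
    have hki : k.1 < 2 * n := k.2
    set i : Fin n := ⟨k.1 / 2, by omega⟩ with hi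
    have hg : gradFn D u i = 0 := by
      apply hLinj i
      rw [Matrix.mulVec_zero]
      exact congrArg WithLp.ofLp (hW i)
    have h2 : k.1 = 2 * i.1 ∨ k.1 = 2 * i.1 + 1 := by
      simp only [hi]
      omega
    rcases h2 with h2 | h2
    · have := congrFun hg 0
      simp only [gradFn, Matrix.cons_val_zero] at this
      have hk : k = (⟨2 * i.1, by have := i.2; omega⟩ : Fin (2 * n)) := Fin.ext h2
      rw [hk]
      exact this
    · have := congrFun hg 1
      simp only [gradFn, Matrix.cons_val_one, Matrix.head_cons] at this
      have hk : k = (⟨2 * i.1 + 1, by have := i.2; omega⟩ : Fin (2 * n)) := Fin.ext h2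
      rw [hk]
      exact this
  -- Part 1 : strict convexity
  have hsc : StrictConvexOn ℝ Set.univ J := by
    refine ⟨convex_univ, fun x _ y _ hxy a b ha hb hab => ?_⟩
    simp only [smul_eq_mul, hJ']
    have hd : ¬(D.mulVec (x - y) = 0 ∧ K.mulVec (x - y) = 0) := by
      rintro ⟨h1, h2⟩
      exact hxy (WithLp.ofLp_injective 2 (sub_eq_zero.mp (hnull _ h1 h2)))
    have hW_le : ∀ i : Fin n, ‖Wfn D L (a • x + b • y) i‖ ^ p i ≤
        a * ‖Wfn D L x i‖ ^ p i + b * ‖Wfn D L y i‖ ^ p i := by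
      intro i
      rw [Wfn_combo]
      exact normPow_le (hp i).le _ _ ha.le hb.le hab
    have hKc : ∀ j, K.mulVec (a • x + b • y) j = a * K.mulVec x j + b * K.mulVec y j := by
      intro j
      rw [mulVec_combo]
      rfl
    have hQ_le : ∀ j : Fin n, (K.mulVec (a • x + b • y) j - g j) ^ 2 ≤
        a * (K.mulVec x j - g j) ^ 2 + b * (K.mulVec y j - g j) ^ 2 := by
      intro j
      rw [hKc j, combo_sq _ _ _ _ _ hab]
      nlinarith [mul_nonneg (mul_nonneg ha.le hb.le) (sq_nonneg (K.mulVec x j - K.mulVec y j))]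
    have hQsum_le : (∑ j : Fin n, (K.mulVec (a • x + b • y) j - g j) ^ 2) ≤
        a * (∑ j : Fin n, (K.mulVec x j - g j) ^ 2)
          + b * (∑ j : Fin n, (K.mulVec y j - g j) ^ 2) := by
      rw [Finset.mul_sum, Finset.mul_sum, ← Finset.sum_add_distrib]
      exact Finset.sum_le_sum fun j _ => hQ_le j
    have hSsum_le : (∑ i : Fin n, ‖Wfn D L (a • x + b • y) i‖ ^ p i) ≤
        a * (∑ i : Fin n, ‖Wfn D L x i‖ ^ p i) + b * (∑ i : Fin n, ‖Wfn D L y i‖ ^ p i) := by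
      rw [Finset.mul_sum, Finset.mul_sum, ← Finset.sum_add_distrib]
      exact Finset.sum_le_sum fun i _ => hW_le i
    by_cases hK : K.mulVec (x - y) = 0
    · -- strictness from the W part
      have hD : D.mulVec (x - y) ≠ 0 := fun h => hd ⟨h, hK⟩
      obtain ⟨k, hk⟩ : ∃ k, D.mulVec x k ≠ D.mulVec y k := by
        by_contra h
        push_neg at h
        apply hD
        funext k
        show D.mulVec ((x : Fin n → ℝ) - y) k = 0
        rw [Matrix.mulVec_sub]
        simp [h k]
      set i : Fin n := ⟨k.1 / 2, by have := k.2; omega⟩ with hi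
      have hWne : Wfn D L x i ≠ Wfn D L y i := by
        intro hEq
        have hg : gradFn D x i = gradFn D y i := hLinj i (congrArg WithLp.ofLp hEq)
        apply hk
        have h2 : k.1 = 2 * i.1 ∨ k.1 = 2 * i.1 + 1 := by
          simp only [hi]; omega
        rcases h2 with h2 | h2
        · have hk2 : k = (⟨2 * i.1, by have := i.2; omega⟩ : Fin (2 * n)) := Fin.ext h2
          rw [hk2]
          have := congrFun hg 0
          simpa [gradFn] using this
        · have hk2 : k = (⟨2 * i.1 + 1, by have := i.2; omega⟩ : Fin (2 * n)) := Fin.ext h2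
          rw [hk2]
          have := congrFun hg 1
          simpa [gradFn] using this
      have hSsum_lt : (∑ i : Fin n, ‖Wfn D L (a • x + b • y) i‖ ^ p i) <
          a * (∑ i : Fin n, ‖Wfn D L x i‖ ^ p i) + b * (∑ i : Fin n, ‖Wfn D L y i‖ ^ p i) := by
        rw [Finset.mul_sum, Finset.mul_sum, ← Finset.sum_add_distrib]
        refine Finset.sum_lt_sum (fun i _ => hW_le i) ⟨i, Finset.mem_univ i, ?_⟩
        rw [Wfn_combo]
        exact normPow_lt (hp i) hWne ha hb hab
      have h3 : μ / 2 * (∑ j : Fin n, (K.mulVec (a • x + b • y) j - g j) ^ 2) ≤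
          μ / 2 * (a * (∑ j : Fin n, (K.mulVec x j - g j) ^ 2)
            + b * (∑ j : Fin n, (K.mulVec y j - g j) ^ 2)) :=
        mul_le_mul_of_nonneg_left hQsum_le (by positivity)
      simp only [WithLp.ofLp_add, WithLp.ofLp_smul]
      nlinarith [hSsum_lt, h3]
    · -- strictness from the quadratic part
      obtain ⟨j, hj⟩ : ∃ j, K.mulVec x j ≠ K.mulVec y j := by
        by_contra h
        push_neg at h
        apply hK
        funext j
        show K.mulVec ((x : Fin n → ℝ) - y) j = 0
        rw [Matrix.mulVec_sub]
        simp [h j]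
      have hQsum_lt : (∑ j : Fin n, (K.mulVec (a • x + b • y) j - g j) ^ 2) <
          a * (∑ j : Fin n, (K.mulVec x j - g j) ^ 2)
            + b * (∑ j : Fin n, (K.mulVec y j - g j) ^ 2) := by
        rw [Finset.mul_sum, Finset.mul_sum, ← Finset.sum_add_distrib]
        refine Finset.sum_lt_sum (fun j _ => hQ_le j) ⟨j, Finset.mem_univ j, ?_⟩
        rw [hKc j, combo_sq _ _ _ _ _ hab]
        have : 0 < a * b * (K.mulVec x j - K.mulVec y j) ^ 2 := by
          apply mul_pos (mul_pos ha hb)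
          exact pow_pos (abs_pos.mpr (sub_ne_zero.mpr hj)) 2 |>.trans_eq (sq_abs _) |>.trans_le le_rfl
        linarith
      have h3 : μ / 2 * (∑ j : Fin n, (K.mulVec (a • x + b • y) j - g j) ^ 2) <
          μ / 2 * (a * (∑ j : Fin n, (K.mulVec x j - g j) ^ 2)
            + b * (∑ j : Fin n, (K.mulVec y j - g j) ^ 2)) :=
        mul_lt_mul_of_pos_left hQsum_lt (by positivity)
      simp only [WithLp.ofLp_add, WithLp.ofLp_smul]
      nlinarith [hSsum_le, h3]
  refine ⟨hsc, ?_⟩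
  -- continuity of the building blocks
  have hWconts : ∀ i : Fin n, Continuous fun u : EuclideanSpace ℝ (Fin n) => Wfn D L u i := by
    intro i
    have hgradcont : Continuous fun u : EuclideanSpace ℝ (Fin n) => gradFn D u i := by
      apply continuous_pi
      intro k
      fin_cases k
      · simp only [gradFn, Matrix.cons_val_zero]
        exact cont_mulVec D _
      · simp only [gradFn, Matrix.cons_val_one, Matrix.head_cons]
        exact cont_mulVec D _
    have h : Continuous fun u : EuclideanSpace ℝ (Fin n) => (L i).mulVec (gradFn D u i) :=
      Continuous.matrix_mulVec continuous_const hgradcont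
    exact (PiLp.continuous_toLp 2 _).comp h
  have hKcont : Continuous fun u : EuclideanSpace ℝ (Fin n) => Kfn K u := by
    have h : Continuous fun u : EuclideanSpace ℝ (Fin n) => (K.mulVec u : Fin n → ℝ) :=
      continuous_pi (cont_mulVec K)
    exact (PiLp.continuous_toLp 2 _).comp h
  have hΦcont : Continuous fun u : EuclideanSpace ℝ (Fin n) =>
      (∑ i : Fin n, ‖Wfn D L u i‖) + ‖Kfn K u‖ :=
    ((continuous_finset_sum _ fun i _ => (hWconts i).norm).add hKcont.norm)
  have hΦzero : ∀ u : EuclideanSpace ℝ (Fin n),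
      (∑ i : Fin n, ‖Wfn D L u i‖) + ‖Kfn K u‖ = 0 → u = 0 := by
    intro u hu
    have hn1 : 0 ≤ ∑ i : Fin n, ‖Wfn D L u i‖ :=
      Finset.sum_nonneg fun i _ => norm_nonneg _
    have hn2 : (0 : ℝ) ≤ ‖Kfn K u‖ := norm_nonneg _
    have hsum : (∑ i : Fin n, ‖Wfn D L u i‖) = 0 := by linarith
    have hKu : ‖Kfn K u‖ = 0 := by linarith
    have hWall : ∀ i, Wfn D L u i = 0 := by
      intro i
      exact norm_eq_zero.mp
        ((Finset.sum_eq_zero_iff_of_nonneg fun i _ => norm_nonneg _).mp hsum i (Finset.mem_univ i))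
    have hD0 : D.mulVec u = 0 := hWzero u hWall
    have hK0 : Kfn K u = 0 := norm_eq_zero.mp hKu
    exact WithLp.ofLp_injective 2 (hnull u hD0 (congrArg WithLp.ofLp hK0))
  have hΦsmul : ∀ (t : ℝ), 0 ≤ t → ∀ u : EuclideanSpace ℝ (Fin n),
      (∑ i : Fin n, ‖Wfn D L (t • u) i‖) + ‖Kfn K (t • u)‖
        = t * ((∑ i : Fin n, ‖Wfn D L u i‖) + ‖Kfn K u‖) := by
    intro t ht u
    have h1 : ∀ i : Fin n, ‖Wfn D L (t • u) i‖ = t * ‖Wfn D L u i‖ := by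
      intro i
      rw [Wfn_smul, norm_smul, Real.norm_eq_abs, abs_of_nonneg ht]
    rw [Finset.sum_congr rfl fun i _ => h1 i, Kfn_smul, norm_smul, Real.norm_eq_abs,
      abs_of_nonneg ht, ← Finset.mul_sum]
    ring
  have hcb : ∃ c : ℝ, 0 < c ∧ ∀ u : EuclideanSpace ℝ (Fin n),
      c * ‖u‖ ≤ (∑ i : Fin n, ‖Wfn D L u i‖) + ‖Kfn K u‖ := by
    rcases Nat.eq_zero_or_pos n with hn | hn
    · refine ⟨1, one_pos, fun u => ?_⟩
      have hu : u = 0 := WithLp.ofLp_injective 2 (funext fun j => absurd j.2 (by omega))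
      rw [hu]
      simp only [norm_zero, mul_zero]
      exact add_nonneg (Finset.sum_nonneg fun i _ => norm_nonneg _) (norm_nonneg _)
    · obtain ⟨z, hz, hzmin⟩ := (isCompact_sphere (0 : EuclideanSpace ℝ (Fin n)) 1).exists_isMinOn
        ⟨EuclideanSpace.single ⟨0, hn⟩ (1 : ℝ), by
          rw [mem_sphere_zero_iff_norm, EuclideanSpace.norm_single]
          norm_num⟩ hΦcont.continuousOn
      have hz1 : ‖z‖ = 1 := mem_sphere_zero_iff_norm.mp hz
      have hzne : z ≠ 0 := by
        intro h
        rw [h, norm_zero] at hz1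
        exact one_ne_zero hz1.symm
      have hzpos : 0 < (∑ i : Fin n, ‖Wfn D L z i‖) + ‖Kfn K z‖ := by
        rcases lt_or_eq_of_le (add_nonneg
            (Finset.sum_nonneg fun i _ => norm_nonneg (Wfn D L z i))
            (norm_nonneg (Kfn K z))) with h | h
        · exact h
        · exact absurd (hΦzero z h.symm) hzne
      refine ⟨_, hzpos, fun u => ?_⟩
      rcases eq_or_ne u 0 with hu | hu
      · rw [hu]
        simp only [norm_zero, mul_zero]
        exact add_nonneg (Finset.sum_nonneg fun i _ => norm_nonneg _) (norm_nonneg _)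
      · have hnu : 0 < ‖u‖ := norm_pos_iff.mpr hu
        have hmem : (‖u‖⁻¹ • u) ∈ Metric.sphere (0 : EuclideanSpace ℝ (Fin n)) 1 := by
          rw [mem_sphere_zero_iff_norm, norm_smul, Real.norm_eq_abs,
            abs_of_pos (inv_pos.mpr hnu), inv_mul_cancel₀ hnu.ne']
        have hmin := isMinOn_iff.mp hzmin _ hmem
        rw [hΦsmul (‖u‖⁻¹) (by positivity) u] at hmin
        calc ((∑ i : Fin n, ‖Wfn D L z i‖) + ‖Kfn K z‖) * ‖u‖
            ≤ (‖u‖⁻¹ * ((∑ i : Fin n, ‖Wfn D L u i‖) + ‖Kfn K u‖)) * ‖u‖ :=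
              mul_le_mul_of_nonneg_right hmin hnu.le
        _ = (∑ i : Fin n, ‖Wfn D L u i‖) + ‖Kfn K u‖ := by field_simp
  obtain ⟨c, hc0, hcb⟩ := hcb
  have hbound : ∀ u, min 1 (μ/4) * c * ‖u‖ - ((n : ℝ) + μ/4 + μ/2 * ∑ j : Fin n, g j ^ 2)
      ≤ J u := by
    intro u
    rw [hJ' u]
    have hAnn : 0 ≤ ∑ i : Fin n, ‖Wfn D L u i‖ := Finset.sum_nonneg fun i _ => norm_nonneg _
    have hSnn : (0:ℝ) ≤ ‖Kfn K u‖ := norm_nonneg _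
    have hF : (∑ i : Fin n, ‖Wfn D L u i‖) - n ≤ ∑ i : Fin n, ‖Wfn D L u i‖ ^ p i := by
      have h1 : ∀ i ∈ Finset.univ, ‖Wfn D L u i‖ - 1 ≤ ‖Wfn D L u i‖ ^ p i :=
        fun i _ => sub_one_le_rpow (norm_nonneg _) (hp i).le
      calc (∑ i : Fin n, ‖Wfn D L u i‖) - n = ∑ i : Fin n, (‖Wfn D L u i‖ - 1) := by
            rw [Finset.sum_sub_distrib]
            simp [Finset.card_univ]
      _ ≤ _ := Finset.sum_le_sum h1
    have hS2 : ‖Kfn K u‖ ^ 2 = ∑ j : Fin n, (K.mulVec u j) ^ 2 := by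
      rw [← sqrt_sum_sq (Kfn K u), Real.sq_sqrt (Finset.sum_nonneg fun j _ => sq_nonneg _)]
      rfl
    have hQ : 1/2 * ‖Kfn K u‖^2 - (∑ j : Fin n, g j ^ 2)
        ≤ ∑ j : Fin n, (K.mulVec u j - g j)^2 := by
      have h1 : ∀ j ∈ Finset.univ, 1/2 * (K.mulVec u j)^2 - g j ^2 ≤ (K.mulVec u j - g j)^2 :=
        fun j _ => by nlinarith [sq_nonneg (K.mulVec u j - 2 * g j)]
      calc 1/2 * ‖Kfn K u‖^2 - (∑ j : Fin n, g j ^ 2)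
          = ∑ j : Fin n, (1/2 * (K.mulVec u j)^2 - g j^2) := by
            rw [hS2, Finset.sum_sub_distrib, Finset.mul_sum]
      _ ≤ _ := Finset.sum_le_sum h1
    have hS1 : ‖Kfn K u‖ - 1 ≤ ‖Kfn K u‖ ^ 2 := by nlinarith [sq_nonneg (2*‖Kfn K u‖ - 1)]
    have hΦu := hcb u
    have hε1 : min 1 (μ/4) ≤ 1 := min_le_left _ _
    have hε2 : min 1 (μ/4) ≤ μ/4 := min_le_right _ _
    have hε0 : 0 < min 1 (μ/4) := lt_min one_pos (by positivity)
    have e2 : min 1 (μ/4) * c * ‖u‖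
        ≤ min 1 (μ/4) * ((∑ i : Fin n, ‖Wfn D L u i‖) + ‖Kfn K u‖) := by
      rw [mul_assoc]
      exact mul_le_mul_of_nonneg_left hΦu hε0.le
    have e1 : min 1 (μ/4) * ((∑ i : Fin n, ‖Wfn D L u i‖) + ‖Kfn K u‖)
        ≤ (∑ i : Fin n, ‖Wfn D L u i‖) + μ/4 * ‖Kfn K u‖ := by
      nlinarith [mul_nonneg (sub_nonneg.mpr hε1) hAnn, mul_nonneg (sub_nonneg.mpr hε2) hSnn]
    have e3 : μ/2 * (1/2 * ‖Kfn K u‖^2 - (∑ j : Fin n, g j ^ 2))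
        ≤ μ/2 * ∑ j : Fin n, (K.mulVec u j - g j)^2 :=
      mul_le_mul_of_nonneg_left hQ (by positivity)
    have e4 : μ/4 * (‖Kfn K u‖ - 1) ≤ μ/4 * ‖Kfn K u‖^2 :=
      mul_le_mul_of_nonneg_left hS1 (by positivity)
    linarith
  have hcoerc : Tendsto J (cocompact (EuclideanSpace ℝ (Fin n))) atTop := by
    refine tendsto_atTop_mono hbound ?_
    have h1 : Tendsto (fun u : EuclideanSpace ℝ (Fin n) => min 1 (μ/4) * c * ‖u‖)
        (cocompact _) atTop :=
      (tendsto_norm_cocompact_atTop).const_mul_atTop (by positivity)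
    simpa [sub_eq_add_neg] using
      tendsto_atTop_add_const_right _ (-((n:ℝ) + μ/4 + μ/2 * ∑ j : Fin n, g j ^ 2)) h1
  have hJcont : Continuous J := by
    have hfe : J = fun u => (∑ i : Fin n, ‖Wfn D L u i‖ ^ p i)
        + μ / 2 * ∑ j : Fin n, (K.mulVec u j - g j) ^ 2 := funext hJ'
    rw [hfe]
    apply Continuous.add
    · apply continuous_finset_sum
      intro i _
      apply Continuous.rpow_const (hWconts i).norm
      intro u
      exact Or.inr (by linarith [hp i])
    · exact continuous_const.mul
        (continuous_finset_sum _ fun j _ => ((cont_mulVec K j).sub continuous_const).pow 2)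
  obtain ⟨ustar, hmin⟩ := hJcont.exists_forall_le hcoerc
  refine ⟨ustar, hmin, fun v hv => ?_⟩
  exact hsc.eq_of_isMinOn (isMinOn_iff.mpr fun x _ => hv x) (isMinOn_iff.mpr fun x _ => hmin x)
    (Set.mem_univ v) (Set.mem_univ ustar)

/-- If all exponents satisfy `pᵢ > 1`, the DTVₚˢᵛ-L₂ functional
`J(u) = ∑ᵢ ‖Lᵢ ((Du)_{2i-1},(Du)_{2i})‖₂^{pᵢ} + μ/2 ‖Ku-g‖₂²`
(with `null(D) ∩ null(K) = {0}`, `Lᵢ` invertible, `μ > 0`)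
is strictly convex on `ℝⁿ` and admits a unique global minimiser. -/
theorem stmt3 {n : ℕ}
    (D : Matrix (Fin (2 * n)) (Fin n) ℝ) (K : Matrix (Fin n) (Fin n) ℝ)
    (hnull : ∀ u : Fin n → ℝ, D.mulVec u = 0 → K.mulVec u = 0 → u = 0)
    (L : Fin n → Matrix (Fin 2) (Fin 2) ℝ) (hL : ∀ i, IsUnit (L i))
    (p : Fin n → ℝ) (hp : ∀ i, 1 < p i) (μ : ℝ) (hμ : 0 < μ) (g : Fin n → ℝ) :
    let grad : EuclideanSpace ℝ (Fin n) → Fin n → Fin 2 → ℝ := fun u i =>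
      ![D.mulVec u ⟨2 * i.1, by have := i.isLt; omega⟩,
        D.mulVec u ⟨2 * i.1 + 1, by have := i.isLt; omega⟩]
    let J : EuclideanSpace ℝ (Fin n) → ℝ := fun u =>
      (∑ i : Fin n,
        Real.sqrt (((L i).mulVec (grad u i) 0) ^ 2 + ((L i).mulVec (grad u i) 1) ^ 2) ^ p i) +
      μ / 2 * ∑ j : Fin n, (K.mulVec u j - g j) ^ 2
    StrictConvexOn ℝ Set.univ J ∧ ∃! ustar : EuclideanSpace ℝ (Fin n), ∀ u, J ustar ≤ J u := by
  intro grad J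
  exact key D K hnull L hL p hp μ hμ g J (fun u => rfl)
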